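/- For every x ∈ X, the commutator of the oracle unitary O^x := (1_Y ⊗ F)·CNOT·(1_Y ⊗ F) with the projection 1_Y ⊗ Π^x satisfies ‖[O^x, 1_Y ⊗ Π^x]‖ ≤ 2·2^{−n/2}·√(2·Γ_x). -/

import Mathlib

/-!
`1 ⊗ Πˣ` commutes with CNOT, so with `G = 1 ⊗ F` the commutator splits as
`[Oˣ, 1 ⊗ Πˣ] = [G, 1 ⊗ Πˣ] · CNOT · G + G · CNOT · [G, 1 ⊗ Πˣ]`, and since `G` and CNOT are
contractions its norm is at most `2 ‖[F, Πˣ]‖`. The unitary `F` is the reflection `1 - |v⟩⟨v|`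
in `v = |⊥⟩ - |φ₀⟩`, `‖v‖² = 2`. Hence `[F, Πˣ] = |a⟩⟨b| - |b⟩⟨a|` for the orthogonal pieces
`a = Πˣ v`, `b = (1 - Πˣ) v`, an operator of norm `‖a‖ ‖b‖ ≤ √2 ‖a‖ = √(2 Γₓ) · 2^{-n/2}`.
-/

open scoped Matrix Kronecker

noncomputable section

/-- The ℓ²→ℓ² operator norm of a square complex matrix. -/
def opNorm {I : Type*} [Fintype I] [DecidableEq I] (A : Matrix I I ℂ) : ℝ :=
  ‖Matrix.toEuclideanCLM (𝕜 := ℂ) A‖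

/-- The commutator [A,B] = AB - BA. -/
def commM {I : Type*} [Fintype I] (A B : Matrix I I ℂ) : Matrix I I ℂ := A * B - B * A

/-- Euclidean norm of a vector in ℂ^I. -/
def vnorm {I : Type*} [Fintype I] (v : I → ℂ) : ℝ := Real.sqrt (∑ i, ‖v i‖ ^ 2)

/-- Y = {0,1}^n. -/
abbrev Yb (n : ℕ) := Fin n → Bool
/-- Ȳ = Y ∪ {⊥}. -/
abbrev Ybar (n : ℕ) := Option (Yb n)

/-- standard basis vector |a⟩. -/
def ket {n : ℕ} (a : Ybar n) : Ybar n → ℂ := fun b => if b = a then 1 else 0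

/-- (-1)^{η⋅y}. -/
def signDot {n : ℕ} (η y : Yb n) : ℂ := (-1 : ℂ) ^ (Finset.univ.filter fun i => η i && y i).card

/-- 2^{-n/2}. -/
def cst (n : ℕ) : ℝ := (2 : ℝ) ^ (-(n : ℝ) / 2)

/-- |φ_η⟩ = 2^{-n/2} ∑_y (-1)^{η⋅y} |y⟩. -/
def phi {n : ℕ} (η : Yb n) : Ybar n → ℂ :=
  fun a => Option.casesOn a 0 fun y => (cst n : ℂ) * signDot η y

/-- |φ_0⟩. -/
def phi0 (n : ℕ) : Ybar n → ℂ := phi fun _ => false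

/-- The Walsh–Hadamard transform on ℂ^Y, extended by the identity on |⊥⟩. -/
def Hbar (n : ℕ) : Matrix (Ybar n) (Ybar n) ℂ :=
  Matrix.of fun a b =>
    match a, b with
    | none, none => 1
    | some y, some y' => (cst n : ℂ) * signDot y y'
    | _, _ => 0

/-- The involution exchanging ⊥ and 0^n. -/
def swapBot (n : ℕ) : Ybar n → Ybar n :=
  fun a =>
    Option.casesOn a (some fun _ => false) fun y =>
      if y = (fun _ => false) then none else some y

/-- The permutation matrix exchanging |⊥⟩ and |0^n⟩. -/
def Sswap (n : ℕ) : Matrix (Ybar n) (Ybar n) ℂ :=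
  Matrix.of fun a b => if a = swapBot n b then 1 else 0

/-- F = H̄ ⬝ S ⬝ H̄. -/
def Fmat (n : ℕ) : Matrix (Ybar n) (Ybar n) ℂ := Hbar n * Sswap n * Hbar n

/-- Γ_x = |{y : (x,y) ∈ R}|. -/
def Gam {n : ℕ} {X : Type*} [Fintype X] (R : X → Yb n → Prop) [∀ x, DecidablePred (R x)]
    (x : X) : ℕ :=
  (Finset.univ.filter fun y => R x y).card

/-- Γ_R = max_x Γ_x. -/
def GamR {n : ℕ} {X : Type*} [Fintype X] (R : X → Yb n → Prop) [∀ x, DecidablePred (R x)] : ℕ :=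
  Finset.univ.sup fun x => Gam R x

/-- whether an entry a ∈ Ȳ satisfies the relation at x (⊥ never does). -/
def hitB {n : ℕ} {X : Type*} (R : X → Yb n → Prop) [∀ x, DecidablePred (R x)] (x : X) :
    Ybar n → Bool :=
  fun a => Option.casesOn a false fun y => decide (R x y)

/-- The projection Π^x = ∑_{y : (x,y)∈R} |y⟩⟨y| on ℂ^Ȳ. -/
def Pix {n : ℕ} {X : Type*} (R : X → Yb n → Prop) [∀ x, DecidablePred (R x)] (x : X) :
    Matrix (Ybar n) (Ybar n) ℂ :=
  Matrix.diagonal fun a => if hitB R x a then 1 else 0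

/-- bitwise xor. -/
def xorY {n : ℕ} (y y' : Yb n) : Yb n := fun i => xor (y i) (y' i)

/-- CNOT on Y × Ȳ (control Ȳ, target Y), acting trivially on |y⟩⊗|⊥⟩. -/
def cnotFun (n : ℕ) : Yb n × Ybar n → Yb n × Ybar n :=
  fun p => Option.casesOn p.2 p fun y' => (xorY p.1 y', p.2)

def CNOTmat (n : ℕ) : Matrix (Yb n × Ybar n) (Yb n × Ybar n) ℂ :=
  Matrix.of fun a b => if a = cnotFun n b then 1 else 0

/-- O^x = (1⊗F)·CNOT·(1⊗F) on ℂ^{Y×Ȳ}. -/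
def Oxsmall (n : ℕ) : Matrix (Yb n × Ybar n) (Yb n × Ybar n) ℂ :=
  ((1 : Matrix (Yb n) (Yb n) ℂ) ⊗ₖ Fmat n) * CNOTmat n *
    ((1 : Matrix (Yb n) (Yb n) ℂ) ⊗ₖ Fmat n)

/-- The database index set D̄ = X → Ȳ. -/
abbrev Db (n : ℕ) (X : Type*) := X → Ybar n

/-- An operator A on ℂ^Ȳ acting on the x-coordinate of ℂ^{D̄}. -/
def onCoord {n : ℕ} {X : Type*} [Fintype X] [DecidableEq X] (x : X)
    (A : Matrix (Ybar n) (Ybar n) ℂ) : Matrix (Db n X) (Db n X) ℂ :=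
  Matrix.of fun d d' => if ∀ x', x' ≠ x → d x' = d' x' then A (d x) (d' x) else 0

/-- Π^x_{D_x} : diagonal projection on ℂ^{D̄} onto databases with (x, d x) ∈ R. -/
def PiDx {n : ℕ} {X : Type*} [Fintype X] [DecidableEq X]
    (R : X → Yb n → Prop) [∀ x, DecidablePred (R x)] (x : X) :
    Matrix (Db n X) (Db n X) ℂ :=
  Matrix.diagonal fun d => if hitB R x (d x) then 1 else 0

/-- Π^∅_D : diagonal projection on ℂ^{D̄} onto databases hitting R nowhere. -/
def PiEmptyD {n : ℕ} {X : Type*} [Fintype X] [DecidableEq X]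
    (R : X → Yb n → Prop) [∀ x, DecidablePred (R x)] :
    Matrix (Db n X) (Db n X) ℂ :=
  Matrix.diagonal fun d => if ∀ x, hitB R x (d x) = false then 1 else 0

/-- CNOT_{YD_x}. -/
def cnotDFun {n : ℕ} {X : Type*} (x : X) : Yb n × Db n X → Yb n × Db n X :=
  fun p => Option.casesOn (p.2 x) p fun yx => (xorY p.1 yx, p.2)

def CNOTD {n : ℕ} {X : Type*} [Fintype X] [DecidableEq X] (x : X) :
    Matrix (Yb n × Db n X) (Yb n × Db n X) ℂ :=
  Matrix.of fun a b => if a = cnotDFun x b then 1 else 0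

/-- F_{D_x}. -/
def FDx (n : ℕ) {X : Type*} [Fintype X] [DecidableEq X] (x : X) :
    Matrix (Db n X) (Db n X) ℂ :=
  onCoord x (Fmat n)

/-- O^x_{YD_x} = F_{D_x}·CNOT_{YD_x}·F_{D_x} on ℂ^{Y×D̄}. -/
def OxD (n : ℕ) {X : Type*} [Fintype X] [DecidableEq X] (x : X) :
    Matrix (Yb n × Db n X) (Yb n × Db n X) ℂ :=
  ((1 : Matrix (Yb n) (Yb n) ℂ) ⊗ₖ FDx n x) * CNOTD x *
    ((1 : Matrix (Yb n) (Yb n) ℂ) ⊗ₖ FDx n x)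

/-- O_{XYD} = ∑_x |x⟩⟨x| ⊗ O^x_{YD_x} on ℂ^{X×Y×D̄}. -/
def OXYD (n : ℕ) (X : Type*) [Fintype X] [DecidableEq X] :
    Matrix (X × Yb n × Db n X) (X × Yb n × Db n X) ℂ :=
  Matrix.of fun p q =>
    if p.1 = q.1 then OxD n p.1 (p.2.1, p.2.2) (q.2.1, q.2.2) else 0

/-- The pointer set P = ZMod (|X|+1). -/
abbrev Ptr (X : Type*) [Fintype X] := ZMod (Fintype.card X + 1)

/-- Encoding of X into the nonzero elements of ZMod (|X|+1). -/
def encodeX {X : Type*} [Fintype X] (x : X) : Ptr X :=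
  (((Fintype.equivFin X x : ℕ) + 1 : ℕ) : Ptr X)

/-- ext(d): the smallest x ∈ X with (x, d x) ∈ R, encoded in ZMod (|X|+1); ∅ ↦ 0. -/
def extD {n : ℕ} {X : Type*} [Fintype X] [LinearOrder X] (R : X → Yb n → Prop)
    [∀ x, DecidablePred (R x)] (d : Db n X) : Ptr X :=
  if h : (Finset.univ.filter fun x => hitB R x (d x) = true).Nonempty then
    encodeX ((Finset.univ.filter fun x => hitB R x (d x) = true).min' h)
  else 0

/-- The purified measurement M_{DP} : |d⟩⊗|w⟩ ↦ |d⟩⊗|w + ext(d)⟩ on ℂ^{D̄×P}. -/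
def MDP {n : ℕ} {X : Type*} [Fintype X] [LinearOrder X] (R : X → Yb n → Prop)
    [∀ x, DecidablePred (R x)] :
    Matrix (Db n X × Ptr X) (Db n X × Ptr X) ℂ :=
  Matrix.of fun p q => if p = (q.1, q.2 + extD R q.1) then 1 else 0

/-- O^x_{YD_x} ⊗ 1_P on ℂ^{Y×D̄×P}. -/
def OxDP (n : ℕ) {X : Type*} [Fintype X] [DecidableEq X] (x : X) :
    Matrix (Yb n × Db n X × Ptr X) (Yb n × Db n X × Ptr X) ℂ :=
  Matrix.of fun p q =>
    if p.2.2 = q.2.2 then OxD n x (p.1, p.2.1) (q.1, q.2.1) else 0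

/-- 1_Y ⊗ M_{DP} on ℂ^{Y×D̄×P}. -/
def MYDP {n : ℕ} {X : Type*} [Fintype X] [LinearOrder X] (R : X → Yb n → Prop)
    [∀ x, DecidablePred (R x)] :
    Matrix (Yb n × Db n X × Ptr X) (Yb n × Db n X × Ptr X) ℂ :=
  Matrix.of fun p q =>
    if p.1 = q.1 then MDP R (p.2.1, p.2.2) (q.2.1, q.2.2) else 0

/-- O_{XYD} ⊗ 1_P on ℂ^{X×Y×D̄×P}. -/
def OXYDP (n : ℕ) (X : Type*) [Fintype X] [DecidableEq X] :
    Matrix (X × Yb n × Db n X × Ptr X) (X × Yb n × Db n X × Ptr X) ℂ :=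
  Matrix.of fun p q =>
    if p.2.2.2 = q.2.2.2 then
      OXYD n X (p.1, p.2.1, p.2.2.1) (q.1, q.2.1, q.2.2.1)
    else 0

/-- 1_{X×Y} ⊗ M_{DP} on ℂ^{X×Y×D̄×P}. -/
def MXYDP {n : ℕ} {X : Type*} [Fintype X] [LinearOrder X] (R : X → Yb n → Prop)
    [∀ x, DecidablePred (R x)] :
    Matrix (X × Yb n × Db n X × Ptr X) (X × Yb n × Db n X × Ptr X) ℂ :=
  Matrix.of fun p q =>
    if p.1 = q.1 ∧ p.2.1 = q.2.1 then
      MDP R (p.2.2.1, p.2.2.2) (q.2.2.1, q.2.2.2)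
    else 0

instance instDEq4 (n : ℕ) (X : Type*) [Fintype X] [DecidableEq X] :
    DecidableEq (X × Yb n × Db n X × Ptr X) :=
  instDecidableEqProd

/-- 1_W ⊗ O_{XYD} ⊗ 1_P on ℂ^{W×X×Y×D̄×P}. -/
def OW (n : ℕ) (W X : Type*) [Fintype X] [DecidableEq X] [DecidableEq W] :
    Matrix (W × X × Yb n × Db n X × Ptr X) (W × X × Yb n × Db n X × Ptr X) ℂ :=
  Matrix.of fun p q =>
    if p.1 = q.1 ∧ p.2.2.2.2 = q.2.2.2.2 then
      OXYD n X (p.2.1, p.2.2.1, p.2.2.2.1) (q.2.1, q.2.2.1, q.2.2.2.1)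
    else 0

/-- 1_{W×X×Y} ⊗ M_{DP} on ℂ^{W×X×Y×D̄×P}. -/
def MW {n : ℕ} (W : Type*) {X : Type*} [Fintype X] [LinearOrder X] [DecidableEq W]
    (R : X → Yb n → Prop) [∀ x, DecidablePred (R x)] :
    Matrix (W × X × Yb n × Db n X × Ptr X) (W × X × Yb n × Db n X × Ptr X) ℂ :=
  Matrix.of fun p q =>
    if p.1 = q.1 ∧ p.2.1 = q.2.1 ∧ p.2.2.1 = q.2.2.1 then
      MDP R (p.2.2.2.1, p.2.2.2.2) (q.2.2.2.1, q.2.2.2.2)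
    else 0

instance instDEq5 (n : ℕ) (W X : Type*) [Fintype X] [DecidableEq X] [DecidableEq W] :
    DecidableEq (W × X × Yb n × Db n X × Ptr X) :=
  instDecidableEqProd

/-- V ⊗ 1_{D̄×P} on ℂ^{W×X×Y×D̄×P}. -/
def Vext (n : ℕ) (W X : Type*) [Fintype X] [DecidableEq X]
    (V : Matrix (W × X × Yb n) (W × X × Yb n) ℂ) :
    Matrix (W × X × Yb n × Db n X × Ptr X) (W × X × Yb n × Db n X × Ptr X) ℂ :=
  Matrix.of fun p q =>
    if p.2.2.2 = q.2.2.2 then V (p.1, p.2.1, p.2.2.1) (q.1, q.2.1, q.2.2.1) else 0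

/-- Ψ = ψ ⊗ |⊥⃗⟩ ⊗ |0⟩. -/
def PsiInit (n : ℕ) {W X : Type*} [Fintype X] [DecidableEq X]
    (ψ : W × X × Yb n → ℂ) : W × X × Yb n × Db n X × Ptr X → ℂ :=
  fun p =>
    if p.2.2.2.1 = (fun _ => (none : Ybar n)) ∧ p.2.2.2.2 = (0 : Ptr X) then
      ψ (p.1, p.2.1, p.2.2.1)
    else 0

/-- 1_{W×X×Y×D̄} ⊗ |0⟩⟨0|_P. -/
def ProjZeroP (n : ℕ) (W X : Type*) [Fintype X] [DecidableEq X] [DecidableEq W] :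
    Matrix (W × X × Yb n × Db n X × Ptr X) (W × X × Yb n × Db n X × Ptr X) ℂ :=
  Matrix.of fun p q =>
    if p.1 = q.1 ∧ p.2.1 = q.2.1 ∧ p.2.2.1 = q.2.2.1 ∧ p.2.2.2.1 = q.2.2.2.1 ∧
        p.2.2.2.2 = (0 : Ptr X) ∧ q.2.2.2.2 = (0 : Ptr X) then 1 else 0

/-- O_{XYD} acting on registers 1, 2 and 5 of ℂ^{X×Y×X'×Y'×D̄}. -/
def Oquery1 (n : ℕ) (X : Type*) [Fintype X] [DecidableEq X] :
    Matrix (X × Yb n × X × Yb n × Db n X) (X × Yb n × X × Yb n × Db n X) ℂ :=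
  Matrix.of fun p q =>
    if p.2.2.1 = q.2.2.1 ∧ p.2.2.2.1 = q.2.2.2.1 then
      OXYD n X (p.1, p.2.1, p.2.2.2.2) (q.1, q.2.1, q.2.2.2.2)
    else 0

/-- O_{X'Y'D} acting on registers 3, 4 and 5 of ℂ^{X×Y×X'×Y'×D̄}. -/
def Oquery2 (n : ℕ) (X : Type*) [Fintype X] [DecidableEq X] :
    Matrix (X × Yb n × X × Yb n × Db n X) (X × Yb n × X × Yb n × Db n X) ℂ :=
  Matrix.of fun p q =>
    if p.1 = q.1 ∧ p.2.1 = q.2.1 then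
      OXYD n X (p.2.2.1, p.2.2.2.1, p.2.2.2.2) (q.2.2.1, q.2.2.2.1, q.2.2.2.2)
    else 0

/-- M^R_{DP} acting on registers D and P of ℂ^{D̄×P×P'}. -/
def Mext1 {n : ℕ} {X : Type*} [Fintype X] [LinearOrder X]
    (R : X → Yb n → Prop) [∀ x, DecidablePred (R x)] :
    Matrix (Db n X × Ptr X × Ptr X) (Db n X × Ptr X × Ptr X) ℂ :=
  Matrix.of fun p q =>
    if p.2.2 = q.2.2 then MDP R (p.1, p.2.1) (q.1, q.2.1) else 0

/-- M^{R'}_{DP'} acting on registers D and P' of ℂ^{D̄×P×P'}. -/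
def Mext2 {n : ℕ} {X : Type*} [Fintype X] [LinearOrder X]
    (R' : X → Yb n → Prop) [∀ x, DecidablePred (R' x)] :
    Matrix (Db n X × Ptr X × Ptr X) (Db n X × Ptr X × Ptr X) ℂ :=
  Matrix.of fun p q =>
    if p.2.1 = q.2.1 then MDP R' (p.1, p.2.2) (q.1, q.2.2) else 0

open Matrix
open scoped Matrix.Norms.L2Operator ComplexOrder

theorem norm_commutator_conj_le {A : Type*} [NormedRing A] (G C P : A) (hCP : Commute C P) :
    ‖G * C * G * P - P * (G * C * G)‖ ≤ 2 * ‖G‖ * ‖C‖ * ‖G * P - P * G‖ := by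
  have hsplit : G * C * G * P - P * (G * C * G)
      = (G * P - P * G) * C * G + G * C * (G * P - P * G) := by
    have h : (G * P - P * G) * C * G + G * C * (G * P - P * G)
        = G * C * G * P - P * (G * C * G) + G * (P * C - C * P) * G := by noncomm_ring
    rw [h, hCP.eq, sub_self, mul_zero, zero_mul, add_zero]
  calc ‖G * C * G * P - P * (G * C * G)‖
      ≤ ‖G * P - P * G‖ * ‖C‖ * ‖G‖ + ‖G‖ * ‖C‖ * ‖G * P - P * G‖ :=
        hsplit ▸ (norm_add_le _ _).trans (add_le_add (norm_mul₃_le ..) (norm_mul₃_le ..))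
    _ = 2 * ‖G‖ * ‖C‖ * ‖G * P - P * G‖ := by ring

theorem norm_le_sqrt_of_star_mul_self_sq_eq_smul {A : Type*} [NormedRing A] [StarRing A]
    [CStarRing A] [NormedAlgebra ℂ A] (M : A) {c : ℝ} (hc : 0 ≤ c)
    (h : (star M * M) * (star M * M) = (c : ℂ) • (star M * M)) : ‖M‖ ≤ √c := by
  set H := star M * M with hH
  have hHH : ‖H‖ * ‖H‖ = c * ‖H‖ := by
    rw [← CStarRing.norm_star_mul_self, (IsSelfAdjoint.star_mul_self M).star_eq, h, norm_smul,
      Complex.norm_real, Real.norm_of_nonneg hc]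
  have hHc : ‖H‖ ≤ c := by nlinarith [norm_nonneg H]
  rw [hH, CStarRing.norm_star_mul_self] at hHc
  exact Real.le_sqrt_of_sq_le (by nlinarith)

section RankTwo

variable {I : Type*} [Fintype I] [DecidableEq I]

theorem norm_vecMulVec_sub_vecMulVec_le {a b : I → ℂ} {α β : ℝ} (hab : star a ⬝ᵥ b = 0)
    (ha : star a ⬝ᵥ a = α) (hb : star b ⬝ᵥ b = β) :
    ‖vecMulVec a (star b) - vecMulVec b (star a)‖ ≤ √(α * β) := by
  have hba : star b ⬝ᵥ a = 0 := by rw [star_dotProduct, hab, star_zero]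
  have hα : 0 ≤ α := Complex.zero_le_real.mp (ha ▸ dotProduct_star_self_nonneg a)
  have hβ : 0 ≤ β := Complex.zero_le_real.mp (hb ▸ dotProduct_star_self_nonneg b)
  set M := vecMulVec a (star b) - vecMulVec b (star a)
  have hMM : star M * M = (β : ℂ) • vecMulVec a (star a) + (α : ℂ) • vecMulVec b (star b) := by
    simp only [M, star_eq_conjTranspose, conjTranspose_sub, conjTranspose_vecMulVec, star_star,
      sub_mul, mul_sub, vecMulVec_mul_vecMulVec, ha, hb, hab, hba, zero_smul, vecMulVec_smul,
      vecMulVec_zero]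
    module
  refine norm_le_sqrt_of_star_mul_self_sq_eq_smul M (mul_nonneg hα hβ) ?_
  rw [hMM]
  simp only [add_mul, mul_add, smul_mul_assoc, mul_smul_comm, vecMulVec_mul_vecMulVec, ha, hb,
    hab, hba, zero_smul, vecMulVec_smul, smul_smul, vecMulVec_zero]
  push_cast
  module

end RankTwo

section Kronecker

variable (J : Type*) {I R : Type*} [Fintype J] [DecidableEq J] [Fintype I] [DecidableEq I]

def oneKroneckerStarAlgHom [CommSemiring R] [StarRing R] :
    Matrix I I R →⋆ₐ[R] Matrix (J × I) (J × I) R where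
  toFun M := 1 ⊗ₖ M
  map_one' := one_kronecker_one
  map_mul' M N := by rw [← mul_kronecker_mul, one_mul]
  map_zero' := kronecker_zero _
  map_add' := kronecker_add _
  commutes' c := by
    simp only [Algebra.algebraMap_eq_smul_one, kronecker_smul, one_kronecker_one]
  map_star' M := by simp [star_eq_conjTranspose, conjTranspose_kronecker]

theorem norm_one_kronecker_le (M : Matrix I I ℂ) : ‖(1 : Matrix J J ℂ) ⊗ₖ M‖ ≤ ‖M‖ :=
  NonUnitalStarAlgHom.norm_apply_le (oneKroneckerStarAlgHom J) M

end Kronecker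

section Reflection

variable {I : Type*} [Fintype I] [DecidableEq I]

theorem norm_one_sub_vecMulVec_le_one {v : I → ℂ} (hv : star v ⬝ᵥ v = 2) :
    ‖1 - vecMulVec v (star v)‖ ≤ 1 := by
  have hstar : star (1 - vecMulVec v (star v)) = 1 - vecMulVec v (star v) := by
    simp [star_eq_conjTranspose]
  have hsq : (1 - vecMulVec v (star v)) * (1 - vecMulVec v (star v)) = 1 := by
    simp only [sub_mul, mul_sub, one_mul, mul_one, vecMulVec_mul_vecMulVec, hv, vecMulVec_smul]
    module
  simpa using norm_le_sqrt_of_star_mul_self_sq_eq_smul (1 - vecMulVec v (star v)) zero_le_one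
    (by rw [hstar, hsq, one_mul, Complex.ofReal_one, one_smul])

theorem norm_commM_one_sub_vecMulVec_le {P : Matrix I I ℂ} (hP : IsStarProjection P)
    {v : I → ℂ} {s α : ℝ} (hv : star v ⬝ᵥ v = s) (hα : star v ⬝ᵥ (P *ᵥ v) = α) :
    ‖commM (1 - vecMulVec v (star v)) P‖ ≤ √(α * (s - α)) := by
  have hPH : Pᴴ = P := hP.isSelfAdjoint
  have hPP : P * P = P := hP.isIdempotentElem
  set a := P *ᵥ v
  set b := v - a
  have hstar_a : star a = star v ᵥ* P := by rw [star_mulVec, hPH]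
  have haa : star a ⬝ᵥ a = α := by
    rw [hstar_a, ← dotProduct_mulVec, mulVec_mulVec, hPP, hα]
  have hav : star a ⬝ᵥ v = α := by rw [hstar_a, ← dotProduct_mulVec, hα]
  have hab : star a ⬝ᵥ b = 0 := by rw [dotProduct_sub, hav, haa, sub_self]
  have hbb : star b ⬝ᵥ b = (s - α : ℝ) := by
    simp only [b, star_sub, sub_dotProduct, dotProduct_sub, hv, hα, hav, haa]
    push_cast; ring
  have hcomm :
      commM (1 - vecMulVec v (star v)) P = vecMulVec a (star b) - vecMulVec b (star a) := by
    rw [commM, sub_mul, mul_sub, one_mul, mul_one, mul_vecMulVec, vecMulVec_mul, ← hstar_a]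
    simp only [b, star_sub, vecMulVec_sub, sub_vecMulVec]
    abel
  rw [hcomm]
  exact norm_vecMulVec_sub_vecMulVec_le hab haa hbb

end Reflection

section WalshHadamard

variable {n : ℕ}

theorem signDot_comm (y y' : Yb n) : signDot y y' = signDot y' y := by
  simp only [signDot, Bool.and_comm]

theorem signDot_eq_prod (y z : Yb n) :
    signDot y z = ∏ i, (if y i && z i then (-1 : ℂ) else 1) := by
  rw [signDot, Finset.card_filter, ← Finset.prod_pow_eq_pow_sum]
  exact Finset.prod_congr rfl fun i _ => by cases y i && z i <;> simp

theorem sum_signDot_mul_signDot (y y' : Yb n) :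
    ∑ z : Yb n, signDot y z * signDot y' z = if y = y' then 2 ^ n else 0 := by
  simp only [signDot_eq_prod, ← Finset.prod_mul_distrib]
  rw [← Fintype.prod_sum fun (i : Fin n) (b : Bool) =>
    (if y i && b then (-1 : ℂ) else 1) * (if y' i && b then -1 else 1)]
  split_ifs with h
  · subst h
    have hfactor (c : Bool) :
        ∑ b : Bool, (if c && b then (-1 : ℂ) else 1) * (if c && b then -1 else 1) = 2 := by
      cases c <;> norm_num
    simp only [hfactor, Finset.prod_const, Finset.card_univ, Fintype.card_fin]
  · obtain ⟨i, hi⟩ := Function.ne_iff.mp h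
    refine Finset.prod_eq_zero (Finset.mem_univ i) ?_
    cases hy : y i <;> cases hy' : y' i <;> simp_all

theorem cst_mul_cst_mul_two_pow (n : ℕ) : (cst n : ℂ) * cst n * 2 ^ n = 1 := by
  have h : cst n * cst n * (2 : ℝ) ^ n = 1 := by
    rw [cst, ← Real.rpow_add two_pos, ← Real.rpow_natCast, ← Real.rpow_add two_pos]
    norm_num
  exact_mod_cast h

theorem Hbar_conjTranspose (n : ℕ) : (Hbar n)ᴴ = Hbar n := by
  ext (_ | y) (_ | y')
  · simp [Hbar]
  · simp [Hbar]
  · simp [Hbar]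
  · simp only [conjTranspose_apply, Hbar, of_apply, star_mul', signDot_comm y']
    simp [signDot]

theorem Hbar_mul_self (n : ℕ) : Hbar n * Hbar n = 1 := by
  ext (_ | y) (_ | y')
  all_goals simp only [mul_apply, Fintype.sum_option, Hbar, of_apply]
  · simp
  · simp
  · simp
  · have hterm (z : Yb n) : (cst n * signDot y z : ℂ) * (cst n * signDot z y') =
        cst n * cst n * (signDot y z * signDot y' z) := by
      rw [signDot_comm z y']; ring
    simp only [hterm, ← Finset.mul_sum, sum_signDot_mul_signDot, one_apply, Option.some_inj]
    split_ifs <;> simp [cst_mul_cst_mul_two_pow]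

end WalshHadamard

section Oracle

variable {n : ℕ}

/- `S = 1 - |u⟩⟨u|` and `F = H̄ S H̄ = 1 - |v⟩⟨v|`
for `u = |⊥⟩ - |0ⁿ⟩` and `v = H̄ u = |⊥⟩ - |φ₀⟩`. -/
def swapVec (n : ℕ) : Ybar n → ℂ := ket none - ket (some fun _ => false)

def reflVec (n : ℕ) : Ybar n → ℂ := ket none - phi0 n

@[simp] theorem reflVec_none : reflVec n none = 1 := by simp [reflVec, ket, phi0, phi]

@[simp] theorem reflVec_some (y : Yb n) : reflVec n (some y) = -cst n := by
  simp [reflVec, ket, phi0, phi, signDot]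

theorem Sswap_eq (n : ℕ) : Sswap n = 1 - vecMulVec (swapVec n) (star (swapVec n)) := by
  ext (_ | y) (_ | y')
  all_goals simp [Sswap, swapBot, swapVec, ket, one_apply, vecMulVec_apply]
  split_ifs <;> simp_all

theorem Hbar_mulVec_swapVec (n : ℕ) : Hbar n *ᵥ swapVec n = reflVec n := by
  ext (_ | y)
  all_goals simp [mulVec, dotProduct, swapVec, ket, Hbar, Fintype.sum_option, signDot]

theorem Fmat_eq (n : ℕ) : Fmat n = 1 - vecMulVec (reflVec n) (star (reflVec n)) := by
  have hstar : star (swapVec n) ᵥ* Hbar n = star (Hbar n *ᵥ swapVec n) := by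
    rw [star_mulVec, Hbar_conjTranspose]
  rw [Fmat, Sswap_eq, mul_sub, sub_mul, mul_one, Hbar_mul_self, mul_vecMulVec, vecMulVec_mul,
    hstar, Hbar_mulVec_swapVec]

theorem star_reflVec_dotProduct_self (n : ℕ) : star (reflVec n) ⬝ᵥ reflVec n = 2 := by
  simp [dotProduct, Fintype.sum_option]
  linear_combination cst_mul_cst_mul_two_pow n

end Oracle

section Relation

variable {n : ℕ} {X : Type*} (R : X → Yb n → Prop) [∀ x, DecidablePred (R x)] (x : X)

theorem Pix_isStarProjection : IsStarProjection (Pix R x) where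
  isIdempotentElem := by simp [IsIdempotentElem, Pix, diagonal_mul_diagonal]
  isSelfAdjoint := by simp [IsSelfAdjoint, Pix, star_eq_conjTranspose, diagonal_conjTranspose]

theorem star_reflVec_dotProduct_Pix_mulVec [Fintype X] :
    star (reflVec n) ⬝ᵥ (Pix R x *ᵥ reflVec n) = ((Gam R x * (cst n * cst n) : ℝ) : ℂ) := by
  simp [dotProduct, Fintype.sum_option, Pix, mulVec_diagonal, hitB, Gam, Finset.sum_ite]

end Relation

section Cnot

variable {n : ℕ}

theorem cnotFun_involutive (n : ℕ) : Function.Involutive (cnotFun n) := by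
  rintro ⟨y, _ | y'⟩
  · rfl
  · simp only [cnotFun, Prod.mk.injEq, and_true]
    funext i
    simp [xorY]

theorem CNOTmat_eq_permMatrix (n : ℕ) :
    CNOTmat n = (cnotFun_involutive n).toPerm.permMatrix ℂ := by
  ext p q
  simp [CNOTmat, PEquiv.toMatrix_apply, (cnotFun_involutive n).eq_iff]

theorem permMatrix_commute_diagonal {ι R : Type*} [Fintype ι] [DecidableEq ι] [Semiring R]
    (σ : Equiv.Perm ι) {d : ι → R} (hd : ∀ i, d (σ i) = d i) :
    Commute (σ.permMatrix R) (diagonal d) := by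
  ext i j
  simp only [mul_diagonal, diagonal_mul, PEquiv.toMatrix_apply, Equiv.toPEquiv_apply,
    Option.mem_def, Option.some_inj]
  split_ifs with h
  · rw [← h, hd, one_mul, mul_one]
  · rw [zero_mul, mul_zero]

theorem CNOTmat_commute_one_kronecker_Pix {X : Type*} (R : X → Yb n → Prop)
    [∀ x, DecidablePred (R x)] (x : X) :
    Commute (CNOTmat n) ((1 : Matrix (Yb n) (Yb n) ℂ) ⊗ₖ Pix R x) := by
  rw [CNOTmat_eq_permMatrix, Pix, ← diagonal_one, diagonal_kronecker_diagonal]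
  refine permMatrix_commute_diagonal _ fun p => ?_
  rcases p with ⟨y, _ | y'⟩ <;> rfl

end Cnot

theorem commM_one_kronecker {J I : Type*} [Fintype J] [DecidableEq J] [Fintype I]
    [DecidableEq I] (A B : Matrix I I ℂ) :
    commM ((1 : Matrix J J ℂ) ⊗ₖ A) (1 ⊗ₖ B) = 1 ⊗ₖ commM A B := by
  change _ = oneKroneckerStarAlgHom J (A * B - B * A)
  rw [map_sub, map_mul, map_mul]
  rfl

theorem stmt8_general (n : ℕ) {X : Type*} [Fintype X]
    (R : X → Yb n → Prop) [∀ x, DecidablePred (R x)] (x : X) :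
    opNorm (commM (Oxsmall n) ((1 : Matrix (Yb n) (Yb n) ℂ) ⊗ₖ Pix R x)) ≤
      2 * (2 : ℝ) ^ (-(n : ℝ) / 2) * Real.sqrt (2 * (Gam R x : ℝ)) := by
  set γ : ℝ := Gam R x * (cst n * cst n)
  have hc : 0 ≤ cst n := Real.rpow_nonneg zero_le_two _
  have hγ : 0 ≤ γ := mul_nonneg (Nat.cast_nonneg _) (mul_self_nonneg _)
  have hF : ‖Fmat n‖ ≤ 1 := by
    rw [Fmat_eq]; exact norm_one_sub_vecMulVec_le_one (star_reflVec_dotProduct_self n)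
  have hFP : ‖commM (Fmat n) (Pix R x)‖ ≤ √(γ * (2 - γ)) := by
    rw [Fmat_eq]
    exact norm_commM_one_sub_vecMulVec_le (Pix_isStarProjection R x)
      (by exact_mod_cast star_reflVec_dotProduct_self n) (star_reflVec_dotProduct_Pix_mulVec R x)
  calc opNorm (commM (Oxsmall n) ((1 : Matrix (Yb n) (Yb n) ℂ) ⊗ₖ Pix R x))
      ≤ 2 * ‖(1 : Matrix (Yb n) (Yb n) ℂ) ⊗ₖ Fmat n‖ * ‖CNOTmat n‖ *
          ‖commM ((1 : Matrix (Yb n) (Yb n) ℂ) ⊗ₖ Fmat n) (1 ⊗ₖ Pix R x)‖ :=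
        norm_commutator_conj_le _ _ _ (CNOTmat_commute_one_kronecker_Pix R x)
    _ ≤ 2 * 1 * 1 * ‖commM (Fmat n) (Pix R x)‖ := by
        rw [commM_one_kronecker]
        gcongr
        · exact (norm_one_kronecker_le _ _).trans hF
        · rw [CNOTmat_eq_permMatrix]; exact permMatrix_l2_opNorm_le _
        · exact norm_one_kronecker_le _ _
    _ ≤ 2 * √(2 * γ) := by
        rw [mul_one, mul_one]
        gcongr
        exact hFP.trans (Real.sqrt_le_sqrt (by nlinarith))
    _ = 2 * (2 : ℝ) ^ (-(n : ℝ) / 2) * √(2 * (Gam R x : ℝ)) := by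
        rw [show 2 * γ = cst n ^ 2 * (2 * Gam R x) by ring, Real.sqrt_mul (sq_nonneg _),
          Real.sqrt_sq hc, cst, mul_assoc]

theorem stmt8 (n : ℕ) {X : Type*} [Fintype X] [Nonempty X]
    (R : X → Yb n → Prop) [∀ x, DecidablePred (R x)] (x : X) :
    opNorm (commM (Oxsmall n) ((1 : Matrix (Yb n) (Yb n) ℂ) ⊗ₖ Pix R x)) ≤
      2 * (2 : ℝ) ^ (-(n : ℝ) / 2) * Real.sqrt (2 * (Gam R x : ℝ)) :=
  stmt8_general n R x

end
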